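/- For any positive integer k, any permutations α and β, and any set of permutations X, the classes I_k ∩ Av(X, α ⊕ 1 ⊕ β) and I_k ∩ Av(X, α ⊕ 1 ⊕ 1 ⊕ β) have the same growth rate. -/

import Mathlib

open Filter

/-- `f` is an embedding (involvement) of the permutation `α` into the permutation `π`:
it is strictly monotone on positions and preserves the relative order of values. -/
def IsEmbedding {m n : ℕ} (α : Equiv.Perm (Fin m)) (π : Equiv.Perm (Fin n))
    (f : Fin m → Fin n) : Prop :=
  StrictMono f ∧ ∀ a b : Fin m, α a < α b ↔ π (f a) < π (f b)

/-- A permutation of arbitrary (finite) length. -/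
abbrev PermSig := Σ n : ℕ, Equiv.Perm (Fin n)

/-- `α ≼ π`: the pattern `α` is involved in `π`. -/
def Involves (α π : PermSig) : Prop := ∃ f, IsEmbedding α.2 π.2 f

/-- The class of permutations avoiding every pattern in `X`. -/
def AvClass (X : Set PermSig) : Set PermSig := {π | ∀ α ∈ X, ¬ Involves α π}

/-- A pattern class: a set of permutations closed downward under involvement. -/
def IsPatternClass (C : Set PermSig) : Prop :=
  ∀ α π : PermSig, Involves α π → π ∈ C → α ∈ C

/-- The number of permutations of length `n` in `C`. -/
noncomputable def classCount (C : Set PermSig) (n : ℕ) : ℕ :=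
  Nat.card {π : Equiv.Perm (Fin n) // (⟨n, π⟩ : PermSig) ∈ C}

/-- The (upper) growth rate `s(C) = limsup |C ∩ S_n|^{1/n}`, valued in `ℝ≥0∞`. -/
noncomputable def growthRate (C : Set PermSig) : ENNReal :=
  Filter.atTop.limsup fun n : ℕ => (classCount C n : ENNReal) ^ (1 / (n : ℝ))

/-- `π` contains a decreasing subsequence of length `k`. -/
def HasDecSeq {n : ℕ} (π : Equiv.Perm (Fin n)) (k : ℕ) : Prop :=
  ∃ q : Fin k → Fin n, StrictMono q ∧ StrictAnti fun i => π (q i)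

/-- The class `I_k = Av(δ_{k+1})` of permutations with no decreasing
subsequence of length `k+1`. -/
def IkClass (k : ℕ) : Set PermSig := {π | ¬ HasDecSeq π.2 (k + 1)}

/-- `f` and `g` witness `π` as a merge of `α` and `β`: both are embeddings and
their ranges partition the points of `π`. -/
def IsMergeVia {a b n : ℕ} (α : Equiv.Perm (Fin a)) (β : Equiv.Perm (Fin b))
    (π : Equiv.Perm (Fin n)) (f : Fin a → Fin n) (g : Fin b → Fin n) : Prop :=
  IsEmbedding α π f ∧ IsEmbedding β π g ∧ ∀ x : Fin n, (∃ i, f i = x) ↔ ¬∃ j, g j = x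

/-- The merge `M(C, D)` of two sets of permutations. -/
def MergeClass (C D : Set PermSig) : Set PermSig :=
  {π | ∃ α ∈ C, ∃ β ∈ D, ∃ f g, IsMergeVia α.2 β.2 π.2 f g}

/-- Number of indices `c` with `c+1 < n` such that exactly one of the points
`c`, `c+1` lies in `S`. -/
noncomputable def posChanges {n : ℕ} (S : Set (Fin n)) : ℕ :=
  Set.ncard {c : Fin n | ∃ h : (c : ℕ) + 1 < n, ¬ (c ∈ S ↔ (⟨(c : ℕ) + 1, h⟩ : Fin n) ∈ S)}

/-- Total number of type changes, by position and by value, of the merge of `π`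
whose first part occupies the set of positions `S`. -/
noncomputable def typeChanges {n : ℕ} (π : Equiv.Perm (Fin n)) (S : Set (Fin n)) : ℕ :=
  posChanges S + posChanges ((fun x => π x) '' S)

/-- The `B`-bounded merge `M_B(C, D)`: merges of a member of `C` with a member of
`D` having at most `B` type changes in total, by position or by value. -/
def BMergeClass (B : ℕ) (C D : Set PermSig) : Set PermSig :=
  {π | ∃ α ∈ C, ∃ β ∈ D, ∃ f g, IsMergeVia α.2 β.2 π.2 f g ∧
    typeChanges π.2 (Set.range f) ≤ B}

/-- The direct sum of two permutations. -/
def dsum {a b : ℕ} (α : Equiv.Perm (Fin a)) (β : Equiv.Perm (Fin b)) :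
    Equiv.Perm (Fin (a + b)) :=
  finSumFinEquiv.symm.trans ((Equiv.sumCongr α β).trans finSumFinEquiv)

/-- The direct sum `α ⊕ β` of two permutations of arbitrary lengths. -/
def DSum (α β : PermSig) : PermSig := ⟨α.1 + β.1, dsum α.2 β.2⟩

/-- The increasing permutation `ι_m` of length `m`. -/
def iotaSig (m : ℕ) : PermSig := ⟨m, 1⟩

/-- The direct sum of a list of permutations. -/
def DSumList (l : List PermSig) : PermSig := l.foldr DSum (iotaSig 0)

/-- A (nonempty) permutation that is not the direct sum of two nonempty permutations. -/
def PlusIndec (ρ : PermSig) : Prop :=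
  ρ.1 ≠ 0 ∧ ∀ α β : PermSig, α.1 ≠ 0 → β.1 ≠ 0 → ρ ≠ DSum α β

/-- `ρ = red(π)`: writing `π = ι_{m₀} ⊕ ρ₁ ⊕ ι_{m₁} ⊕ ⋯ ⊕ ρ_c ⊕ ι_{m_c}` with each
`ρ_i` plus indecomposable of length at least 2, the rigid reduction of `π` is
`ρ = ρ₁ ⊕ ⋯ ⊕ ρ_c`. -/
def IsRigidReductionOf (ρ π : PermSig) : Prop :=
  ∃ (m₀ : ℕ) (pairs : List (PermSig × ℕ)),
    (∀ p ∈ pairs, PlusIndec p.1 ∧ 2 ≤ p.1.1) ∧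
    π = DSum (iotaSig m₀) (DSumList (pairs.map fun p => DSum p.1 (iotaSig p.2))) ∧
    ρ = DSumList (pairs.map Prod.fst)

/-!
Call `p` an articulation point of `π` if it plays the role of the `1` in some copy of
`α ⊕ 1 ⊕ β`, i.e. `π` contains `α` strictly south-west of `p` and `β` strictly north-east of it.
Two articulation points `p`, `q` with `q` north-east of `p` yield a copy of `α ⊕ 1 ⊕ 1 ⊕ β`.
So in a member `π` of `I_k ∩ Av(X, α ⊕ 1 ⊕ 1 ⊕ β)` the articulation points form a decreasing
subsequence, hence there are at most `k` of them, and deleting them leaves a member of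
`I_k ∩ Av(X, α ⊕ 1 ⊕ β)`. Since `π` is recovered from this pattern together with the positions
and values of the deleted points, the larger class has at most polynomially many times as many
members of length `n` as the smaller one has of lengths `n - k, …, n`, which does not change
the growth rate. The reverse inequality holds because `α ⊕ 1 ⊕ β ≼ α ⊕ 1 ⊕ 1 ⊕ β`.
-/

open Finset

section Embeddings

variable {a b m n : ℕ} {α : Equiv.Perm (Fin a)} {β : Equiv.Perm (Fin b)}
  {ρ : Equiv.Perm (Fin m)} {π : Equiv.Perm (Fin n)}

def SouthWest (π : Equiv.Perm (Fin n)) (x y : Fin n) : Prop := x < y ∧ π x < π y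

theorem SouthWest.trans {x y z : Fin n} (hxy : SouthWest π x y) (hyz : SouthWest π y z) :
    SouthWest π x z :=
  ⟨hxy.1.trans hyz.1, hxy.2.trans hyz.2⟩

theorem IsEmbedding.comp {f : Fin a → Fin m} {g : Fin m → Fin n}
    (hf : IsEmbedding α ρ f) (hg : IsEmbedding ρ π g) : IsEmbedding α π (g ∘ f) :=
  ⟨hg.1.comp hf.1, fun i j => (hf.2 i j).trans (hg.2 (f i) (f j))⟩

theorem IsEmbedding.southWest {f : Fin m → Fin n} (hf : IsEmbedding ρ π f) {x y : Fin m}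
    (h : SouthWest ρ x y) : SouthWest π (f x) (f y) :=
  ⟨hf.1 h.1, (hf.2 x y).1 h.2⟩

theorem Involves.trans {σ τ υ : PermSig} (h₁ : Involves σ τ) (h₂ : Involves τ υ) :
    Involves σ υ :=
  let ⟨f, hf⟩ := h₁; let ⟨g, hg⟩ := h₂; ⟨g ∘ f, hf.comp hg⟩

theorem isEmbedding_one (π : Equiv.Perm (Fin n)) (x : Fin n) :
    IsEmbedding (1 : Equiv.Perm (Fin 1)) π (fun _ => x) :=
  ⟨Subsingleton.strictMono _, fun i j => by simp [Subsingleton.elim i j]⟩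

@[simp] theorem Fin.castAdd_lt_castAdd_iff {i i' : Fin a} :
    Fin.castAdd b i < Fin.castAdd b i' ↔ i < i' := Iff.rfl

@[simp] theorem Fin.castAdd_lt_natAdd (i : Fin a) (j : Fin b) :
    Fin.castAdd b i < Fin.natAdd a j := by
  rw [Fin.lt_def, Fin.val_castAdd, Fin.val_natAdd]; omega

@[simp] theorem dsum_castAdd (i : Fin a) : dsum α β (Fin.castAdd b i) = Fin.castAdd b (α i) := by
  simp [dsum]

@[simp] theorem dsum_natAdd (j : Fin b) : dsum α β (Fin.natAdd a j) = Fin.natAdd a (β j) := by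
  simp [dsum]

theorem isEmbedding_dsum_append_iff {f : Fin a → Fin n} {g : Fin b → Fin n} :
    IsEmbedding (dsum α β) π (Fin.append f g) ↔
      IsEmbedding α π f ∧ IsEmbedding β π g ∧ ∀ i j, SouthWest π (f i) (g j) := by
  constructor
  · rintro ⟨hmono, hval⟩
    refine ⟨⟨fun i i' h => ?_, fun i i' => ?_⟩, ⟨fun j j' h => ?_, fun j j' => ?_⟩,
      fun i j => ⟨?_, ?_⟩⟩
    · simpa using hmono (Fin.castAdd_lt_castAdd_iff.2 h)
    · simpa using hval (Fin.castAdd b i) (Fin.castAdd b i')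
    · simpa using hmono ((Fin.natAdd_lt_natAdd_iff a).2 h)
    · simpa using hval (Fin.natAdd a j) (Fin.natAdd a j')
    · simpa using hmono (Fin.castAdd_lt_natAdd i j)
    · simpa using (hval (Fin.castAdd b i) (Fin.natAdd a j)).1 (by simp)
  · rintro ⟨hf, hg, hfg⟩
    refine ⟨fun x y hxy => ?_, fun x y => ?_⟩
    · induction x using Fin.addCases <;> induction y using Fin.addCases <;>
        simp only [Fin.append_left, Fin.append_right]
      · exact hf.1 hxy
      · exact (hfg _ _).1
      · exact absurd hxy (Fin.castAdd_lt_natAdd _ _).asymm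
      · exact hg.1 ((Fin.natAdd_lt_natAdd_iff a).1 hxy)
    · induction x using Fin.addCases <;> induction y using Fin.addCases <;>
        simp only [Fin.append_left, Fin.append_right, dsum_castAdd, dsum_natAdd,
          Fin.castAdd_lt_castAdd_iff, Fin.natAdd_lt_natAdd_iff, Fin.castAdd_lt_natAdd]
      · exact hf.2 _ _
      · exact iff_of_true trivial (hfg _ _).2
      · exact iff_of_false (Fin.castAdd_lt_natAdd _ _).asymm (hfg _ _).2.asymm
      · exact hg.2 _ _

theorem isEmbedding_dsum_iff {e : Fin (a + b) → Fin n} :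
    IsEmbedding (dsum α β) π e ↔
      IsEmbedding α π (fun i => e (Fin.castAdd b i)) ∧
        IsEmbedding β π (fun j => e (Fin.natAdd a j)) ∧
          ∀ i j, SouthWest π (e (Fin.castAdd b i)) (e (Fin.natAdd a j)) := by
  conv_lhs => rw [← Fin.append_castAdd_natAdd (f := e)]
  exact isEmbedding_dsum_append_iff

theorem isEmbedding_dsum_self :
    IsEmbedding α (dsum α β) (Fin.castAdd b) ∧ IsEmbedding β (dsum α β) (Fin.natAdd a) ∧
      ∀ i j, SouthWest (dsum α β) (Fin.castAdd b i) (Fin.natAdd a j) :=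
  (isEmbedding_dsum_iff (e := id)).1 ⟨strictMono_id, fun _ _ => Iff.rfl⟩

theorem SouthWest.append_singleton {x y : Fin n} {g : Fin b → Fin n}
    (hxy : SouthWest π x y) (hyg : ∀ j, SouthWest π y (g j)) (z : Fin (1 + b)) :
    SouthWest π x (Fin.append (fun _ => y) g z) := by
  induction z using Fin.addCases with
  | left => simpa using hxy
  | right j => simpa using hxy.trans (hyg j)

end Embeddings

theorem involves_dsum_right (σ τ : PermSig) : Involves τ (DSum σ τ) :=
  ⟨_, isEmbedding_dsum_self.2.1⟩

theorem Involves.dsum_left (σ : PermSig) {τ υ : PermSig} (h : Involves τ υ) :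
    Involves (DSum σ τ) (DSum σ υ) := by
  obtain ⟨g, hg⟩ := h
  obtain ⟨hl, hr, hsep⟩ := isEmbedding_dsum_self (α := σ.2) (β := υ.2)
  exact ⟨_, isEmbedding_dsum_append_iff.2 ⟨hl, hg.comp hr, fun i j => hsep i (g j)⟩⟩

theorem hasDecSeq_of_strictAntiOn {n m : ℕ} {π : Equiv.Perm (Fin n)} {S : Finset (Fin n)}
    (hS : StrictAntiOn π S) (hm : m ≤ #S) : HasDecSeq π m :=
  ⟨fun i => S.orderEmbOfFin rfl (Fin.castLE hm i),
    (S.orderEmbOfFin rfl).strictMono.comp (Fin.strictMono_castLE hm),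
    fun _ _ hij => hS (S.orderEmbOfFin_mem rfl _) (S.orderEmbOfFin_mem rfl _)
      ((S.orderEmbOfFin rfl).strictMono hij)⟩

theorem IkClass_isPatternClass (k : ℕ) : IsPatternClass (IkClass k) := by
  rintro σ τ ⟨f, hf⟩ hτ ⟨q, hq, hdec⟩
  exact hτ ⟨f ∘ q, hf.1.comp hq, fun i j hij => (hf.2 (q j) (q i)).1 (hdec hij)⟩

theorem AvClass_isPatternClass (X : Set PermSig) : IsPatternClass (AvClass X) :=
  fun _ _ hστ hτ υ hυ hυσ => hτ υ hυ (hυσ.trans hστ)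

theorem mem_avClass_union_singleton {X : Set PermSig} {σ π : PermSig} :
    π ∈ AvClass (X ∪ {σ}) ↔ π ∈ AvClass X ∧ ¬ Involves σ π := by
  simp [AvClass, or_imp, forall_and, and_comm]

section Pattern

variable {n : ℕ} (π : Equiv.Perm (Fin n)) (R : Finset (Fin n))

/-- The pattern formed by the points of `π` at the positions in `R`. -/
noncomputable def patternOn : Equiv.Perm (Fin R.card) :=
  (R.orderIsoOfFin rfl).toEquiv.trans <|
    (π.subtypeEquiv fun _ => (π.injective.mem_finset_image).symm).trans
      ((R.image π).orderIsoOfFin (card_image_of_injective R π.injective)).symm.toEquiv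

theorem orderEmbOfFin_patternOn (h : (R.image π).card = R.card) (i : Fin R.card) :
    (R.image π).orderEmbOfFin h (patternOn π R i) = π (R.orderEmbOfFin rfl i) := by
  simp [patternOn, ← Finset.coe_orderIsoOfFin_apply]

theorem isEmbedding_patternOn : IsEmbedding (patternOn π R) π (R.orderEmbOfFin rfl) :=
  ⟨(R.orderEmbOfFin rfl).strictMono, fun i j => by
    rw [← orderEmbOfFin_patternOn π R (card_image_of_injective R π.injective),
      ← orderEmbOfFin_patternOn π R (card_image_of_injective R π.injective),
      OrderEmbedding.lt_iff_lt]⟩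

theorem involves_patternOn : Involves ⟨_, patternOn π R⟩ ⟨n, π⟩ :=
  ⟨_, isEmbedding_patternOn π R⟩

theorem notMem_image_iff {y : Fin n} : y ∉ R.image π ↔ ∃ x ∉ R, π x = y := by
  constructor
  · exact fun h => ⟨π.symm y, fun hx => h (mem_image.2 ⟨_, hx, by simp⟩), by simp⟩
  · rintro ⟨x, hx, rfl⟩ h
    exact hx (π.injective.mem_finset_image.1 h)

theorem eq_of_patternOn_eq {π π' : Equiv.Perm (Fin n)} (hR : ∀ x ∉ R, π x = π' x)
    (h : patternOn π R = patternOn π' R) : π = π' := by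
  have himg : R.image π = R.image π' := by
    ext y
    rw [← not_iff_not, notMem_image_iff, notMem_image_iff]
    exact exists_congr fun x => and_congr_right fun hx => by rw [hR x hx]
  ext x
  by_cases hx : x ∈ R
  · obtain ⟨i, rfl⟩ : x ∈ Set.range (R.orderEmbOfFin rfl) := by
      rwa [Finset.range_orderEmbOfFin]
    rw [← orderEmbOfFin_patternOn π R (card_image_of_injective R π.injective),
      ← orderEmbOfFin_patternOn π' R (card_image_of_injective R π'.injective), h]
    simp_rw [himg]
  · exact congrArg _ (hR x hx)

end Pattern

section Articulation

variable {n : ℕ} {π : Equiv.Perm (Fin n)} (α β : PermSig)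

def IsArticulation (π : Equiv.Perm (Fin n)) (p : Fin n) : Prop :=
  (∃ f, IsEmbedding α.2 π f ∧ ∀ i, SouthWest π (f i) p) ∧
    ∃ g, IsEmbedding β.2 π g ∧ ∀ j, SouthWest π p (g j)

theorem involves_iff_exists_isArticulation :
    Involves (DSum α (DSum (iotaSig 1) β)) ⟨n, π⟩ ↔ ∃ p, IsArticulation α β π p := by
  constructor
  · rintro ⟨e, he⟩
    obtain ⟨hf, he', hfe'⟩ := isEmbedding_dsum_iff.1 he
    obtain ⟨-, hg, hpg⟩ := isEmbedding_dsum_iff.1 he'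
    exact ⟨_, ⟨_, hf, fun i => by simpa using hfe' i (Fin.castAdd _ (0 : Fin 1))⟩,
      ⟨_, hg, hpg (0 : Fin 1)⟩⟩
  · rintro ⟨p, ⟨f, hf, hfp⟩, ⟨g, hg, hpg⟩⟩
    exact ⟨_, isEmbedding_dsum_append_iff.2 ⟨hf,
      isEmbedding_dsum_append_iff.2 ⟨isEmbedding_one π p, hg, fun _ => hpg⟩,
      fun i => (hfp i).append_singleton hpg⟩⟩

theorem involves_of_isArticulation_of_southWest {p q : Fin n}
    (hp : IsArticulation α β π p) (hq : IsArticulation α β π q) (hpq : SouthWest π p q) :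
    Involves (DSum α (DSum (iotaSig 1) (DSum (iotaSig 1) β))) ⟨n, π⟩ := by
  obtain ⟨⟨f, hf, hfp⟩, -⟩ := hp
  obtain ⟨-, ⟨g, hg, hqg⟩⟩ := hq
  exact ⟨_, isEmbedding_dsum_append_iff.2 ⟨hf,
    isEmbedding_dsum_append_iff.2 ⟨isEmbedding_one π p,
      isEmbedding_dsum_append_iff.2 ⟨isEmbedding_one π q, hg, fun _ => hqg⟩,
      fun _ => hpq.append_singleton hqg⟩,
    fun i => (hfp i).append_singleton (hpq.append_singleton hqg)⟩⟩

open Classical in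
noncomputable def articulations (π : Equiv.Perm (Fin n)) : Finset (Fin n) :=
  univ.filter (IsArticulation α β π)

theorem mem_articulations {p : Fin n} : p ∈ articulations α β π ↔ IsArticulation α β π p := by
  simp [articulations]

variable {α β}

theorem IsArticulation.map {m : ℕ} {ρ : Equiv.Perm (Fin m)} {p : Fin m} {e : Fin m → Fin n}
    (hp : IsArticulation α β ρ p) (he : IsEmbedding ρ π e) : IsArticulation α β π (e p) := by
  obtain ⟨⟨f, hf, hfp⟩, ⟨g, hg, hpg⟩⟩ := hp
  exact ⟨⟨_, hf.comp he, fun i => he.southWest (hfp i)⟩,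
    ⟨_, hg.comp he, fun j => he.southWest (hpg j)⟩⟩

theorem strictAntiOn_articulations
    (hτ : ¬ Involves (DSum α (DSum (iotaSig 1) (DSum (iotaSig 1) β))) ⟨n, π⟩) :
    StrictAntiOn π (articulations α β π) := by
  intro p hp q hq hpq
  refine lt_of_le_of_ne (not_lt.1 fun hval => hτ ?_) (π.injective.ne hpq.ne')
  exact involves_of_isArticulation_of_southWest α β ((mem_articulations α β).1 hp)
    ((mem_articulations α β).1 hq) ⟨hpq, hval⟩

theorem card_articulations_le {k : ℕ} (hk : (⟨n, π⟩ : PermSig) ∈ IkClass k)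
    (hτ : ¬ Involves (DSum α (DSum (iotaSig 1) (DSum (iotaSig 1) β))) ⟨n, π⟩) :
    #(articulations α β π) ≤ k :=
  not_lt.1 fun h => hk (hasDecSeq_of_strictAntiOn (strictAntiOn_articulations hτ) h)

theorem not_involves_patternOn_compl_articulations :
    ¬ Involves (DSum α (DSum (iotaSig 1) β)) ⟨_, patternOn π (articulations α β π)ᶜ⟩ := by
  rw [involves_iff_exists_isArticulation]
  rintro ⟨p, hp⟩
  have hmem := (articulations α β π)ᶜ.orderEmbOfFin_mem rfl p
  exact mem_compl.1 hmem ((mem_articulations α β).2 (hp.map (isEmbedding_patternOn π _)))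

end Articulation

theorem eq_of_image_graph_eq_of_patternOn_eq {n : ℕ} {π π' : Equiv.Perm (Fin n)}
    {G G' : Finset (Fin n)}
    (hgraph : G.image (fun x => (x, π x)) = G'.image (fun x => (x, π' x)))
    (hpat : (⟨_, patternOn π Gᶜ⟩ : PermSig) = ⟨_, patternOn π' G'ᶜ⟩) : π = π' := by
  obtain rfl : G = G' := by
    simpa [image_image, Function.comp_def] using congrArg (image Prod.fst) hgraph
  refine eq_of_patternOn_eq Gᶜ (fun x hx => ?_) (eq_of_heq (Sigma.mk.inj_iff.1 hpat).2)
  have hmem : (x, π x) ∈ G.image (fun x => (x, π' x)) :=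
    hgraph ▸ mem_image_of_mem _ (notMem_compl.1 hx)
  obtain ⟨y, -, hyx⟩ := mem_image.1 hmem
  obtain ⟨rfl, h⟩ := Prod.ext_iff.1 hyx
  exact h.symm

open Classical in
theorem classCount_eq_card_filter (C : Set PermSig) (n : ℕ) :
    classCount C n = #(univ.filter fun π : Equiv.Perm (Fin n) => (⟨n, π⟩ : PermSig) ∈ C) := by
  rw [classCount, Nat.card_eq_fintype_card, Fintype.card_subtype]

open Classical in
noncomputable def classSlice (C : Set PermSig) (m : ℕ) : Finset PermSig :=
  (univ.filter fun π : Equiv.Perm (Fin m) => (⟨m, π⟩ : PermSig) ∈ C).map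
    ⟨Sigma.mk m, sigma_mk_injective⟩

theorem card_classSlice (C : Set PermSig) (m : ℕ) : #(classSlice C m) = classCount C m := by
  rw [classSlice, card_map, classCount_eq_card_filter]

theorem mem_classSlice {C : Set PermSig} {m : ℕ} {σ : PermSig} :
    σ ∈ classSlice C m ↔ σ.1 = m ∧ σ ∈ C := by
  obtain ⟨l, σ⟩ := σ
  simp only [classSlice, Finset.mem_map, mem_filter, mem_univ, true_and,
    Function.Embedding.coeFn_mk, Sigma.mk.inj_iff]
  constructor
  · rintro ⟨τ, hτ, rfl, h⟩
    exact ⟨rfl, eq_of_heq h ▸ hτ⟩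
  · rintro ⟨rfl, hσ⟩
    exact ⟨σ, hσ, rfl, HEq.rfl⟩

theorem card_biUnion_powersetCard_le {β : Type*} [DecidableEq β] (s : Finset β) (k : ℕ) :
    #((range (k + 1)).biUnion fun j => powersetCard j s) ≤ (k + 1) * (#s + 1) ^ k := by
  calc _ ≤ ∑ j ∈ range (k + 1), #(powersetCard j s) := card_biUnion_le
    _ ≤ ∑ _j ∈ range (k + 1), (#s + 1) ^ k := by
      refine sum_le_sum fun j hj => ?_
      rw [card_powersetCard]
      calc (#s).choose j ≤ #s ^ j := Nat.choose_le_pow _ _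
        _ ≤ (#s + 1) ^ j := Nat.pow_le_pow_left (Nat.le_succ _) _
        _ ≤ (#s + 1) ^ k := Nat.pow_le_pow_right (Nat.succ_pos _) (mem_range_succ_iff.1 hj)
    _ = (k + 1) * (#s + 1) ^ k := by rw [sum_const, card_range, smul_eq_mul]

theorem classCount_le_of_exists_deletion {C D : Set PermSig} {k : ℕ}
    (hD : ∀ n (π : Equiv.Perm (Fin n)), (⟨n, π⟩ : PermSig) ∈ D →
      ∃ G : Finset (Fin n), #G ≤ k ∧ (⟨_, patternOn π Gᶜ⟩ : PermSig) ∈ C) (n : ℕ) :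
    classCount D n ≤
      (k + 1) * (n * n + 1) ^ k * ∑ j ∈ range (k + 1), classCount C (n - j) := by
  classical
  choose! G hGk hGC using hD n
  let graphs := (range (k + 1)).biUnion fun j => powersetCard j (univ : Finset (Fin n × Fin n))
  let patterns := (range (k + 1)).biUnion fun j => classSlice C (n - j)
  let encode (π : Equiv.Perm (Fin n)) : Finset (Fin n × Fin n) × PermSig :=
    ((G π).image fun x => (x, π x), ⟨_, patternOn π (G π)ᶜ⟩)
  have hmaps : Set.MapsTo encode (univ.filter fun π => (⟨n, π⟩ : PermSig) ∈ D)
      (graphs ×ˢ patterns : Finset _) := by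
    intro π hπ
    have hπ := (mem_filter.1 hπ).2
    simp only [graphs, patterns, encode, mem_coe, mem_product, mem_biUnion, mem_range,
      mem_powersetCard, mem_classSlice, Nat.lt_succ_iff]
    refine ⟨⟨_, (card_image_le).trans (hGk π hπ), subset_univ _, rfl⟩,
      ⟨#(G π), hGk π hπ, ?_, hGC π hπ⟩⟩
    simp [card_compl]
  have hinj : Set.InjOn encode (univ.filter fun π => (⟨n, π⟩ : PermSig) ∈ D) :=
    fun _ _ _ _ h => eq_of_image_graph_eq_of_patternOn_eq (Prod.ext_iff.1 h).1 (Prod.ext_iff.1 h).2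
  calc classCount D n ≤ #(graphs ×ˢ patterns) := by
        rw [classCount_eq_card_filter]; exact card_le_card_of_injOn encode hmaps hinj
    _ = #graphs * #patterns := card_product _ _
    _ ≤ (k + 1) * (n * n + 1) ^ k * ∑ j ∈ range (k + 1), classCount C (n - j) := by
        refine Nat.mul_le_mul ?_ ?_
        · simpa using card_biUnion_powersetCard_le (univ : Finset (Fin n × Fin n)) k
        · exact card_biUnion_le.trans_eq (sum_congr rfl fun j _ => card_classSlice C (n - j))

section GrowthRate

open scoped ENNReal

theorem eventually_le_pow_of_limsup_root_lt {u : ℕ → ℝ≥0∞} {t : ℝ≥0∞}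
    (h : limsup (fun n : ℕ => u n ^ (1 / (n : ℝ))) atTop < t) : ∀ᶠ n in atTop, u n ≤ t ^ n := by
  filter_upwards [eventually_lt_of_limsup_lt h, eventually_ge_atTop 1] with n hn hn1
  rw [one_div, ENNReal.rpow_inv_lt_iff (by exact_mod_cast hn1), ENNReal.rpow_natCast] at hn
  exact hn.le

theorem limsup_root_le_of_eventually_le_pow {u : ℕ → ℝ≥0∞} {t : ℝ≥0∞}
    (h : ∀ᶠ n in atTop, u n ≤ t ^ n) : limsup (fun n : ℕ => u n ^ (1 / (n : ℝ))) atTop ≤ t :=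
  limsup_le_of_le (by isBoundedDefault) <| by
    filter_upwards [h, eventually_ge_atTop 1] with n hn hn1
    rwa [one_div, ENNReal.rpow_inv_le_iff (by exact_mod_cast hn1), ENNReal.rpow_natCast]

theorem Real.eventually_mul_add_one_pow_le_pow {K r : ℝ} (hr : 1 < r) (m : ℕ) :
    ∀ᶠ n : ℕ in atTop, K * ((n : ℝ) + 1) ^ m ≤ r ^ n := by
  have hlim := ((tendsto_pow_const_div_const_pow_of_one_lt m hr).comp
    (tendsto_add_atTop_nat 1)).const_mul (K * r)
  rw [mul_zero] at hlim
  filter_upwards [hlim.eventually (gt_mem_nhds one_pos)] with n hn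
  have hrn : 0 < r ^ n := pow_pos (one_pos.trans hr) n
  have hr0 : 0 < r := one_pos.trans hr
  simp only [Function.comp_apply, Nat.cast_add, Nat.cast_one, pow_succ] at hn
  rw [← mul_div_assoc, div_lt_one (by positivity)] at hn
  nlinarith

theorem ENNReal.eventually_mul_add_one_pow_le_pow {K r : ℝ≥0∞} (hK : K ≠ ⊤) (hr : 1 < r)
    (hr' : r ≠ ⊤) (m : ℕ) : ∀ᶠ n : ℕ in atTop, K * ((n : ℝ≥0∞) + 1) ^ m ≤ r ^ n := by
  have hr1 : 1 < r.toReal := by simpa using ENNReal.toReal_strict_mono hr' hr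
  filter_upwards [Real.eventually_mul_add_one_pow_le_pow (K := K.toReal) hr1 m] with n hn
  rw [← ENNReal.toReal_le_toReal (by finiteness) (by finiteness)]
  simpa [ENNReal.toReal_mul, ENNReal.toReal_pow, ENNReal.toReal_add] using hn

theorem ENNReal.pow_sub_le_mul_pow {t : ℝ≥0∞} (ht0 : t ≠ 0) (ht : t ≠ ⊤) {j k n : ℕ}
    (hjk : j ≤ k) (hjn : j ≤ n) : t ^ (n - j) ≤ (1 + t⁻¹) ^ k * t ^ n := by
  calc t ^ (n - j) = t ^ (n - j) * (t ^ j * (t ^ j)⁻¹) := by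
        rw [ENNReal.mul_inv_cancel (by simp [ht0]) (by simp [ht]), mul_one]
    _ = t⁻¹ ^ j * t ^ n := by
        rw [← mul_assoc, ← pow_add, Nat.sub_add_cancel hjn, ENNReal.inv_pow, mul_comm]
    _ ≤ (1 + t⁻¹) ^ j * t ^ n := mul_le_mul_left (pow_le_pow_left₀ zero_le le_add_self j) _
    _ ≤ (1 + t⁻¹) ^ k * t ^ n := mul_le_mul_left (pow_le_pow_right₀ le_self_add hjk) _

theorem limsup_root_le_of_le_mul_sum_shift {a b : ℕ → ℕ} {c m k : ℕ}
    (h : ∀ n, a n ≤ c * (n + 1) ^ m * ∑ j ∈ range (k + 1), b (n - j)) :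
    limsup (fun n : ℕ => (a n : ℝ≥0∞) ^ (1 / (n : ℝ))) atTop ≤
      limsup (fun n : ℕ => (b n : ℝ≥0∞) ^ (1 / (n : ℝ))) atTop := by
  refine le_of_forall_gt_imp_ge_of_dense fun s hs => ?_
  rcases eq_or_ne s ⊤ with rfl | hs_top
  · exact le_top
  obtain ⟨t, hbt, hts⟩ := exists_between hs
  have ht0 : t ≠ 0 := (zero_le.trans_lt hbt).ne'
  have ht_top : t ≠ ⊤ := (hts.trans_le le_top).ne
  obtain ⟨N, hN⟩ := eventually_atTop.1 (eventually_le_pow_of_limsup_root_lt hbt)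
  have hr : 1 < s / t := by rwa [ENNReal.lt_div_iff_mul_lt (.inl ht0) (.inl ht_top), one_mul]
  have hK : (c * (k + 1) * (1 + t⁻¹) ^ k : ℝ≥0∞) ≠ ⊤ := by simp [ht0, ENNReal.mul_eq_top]
  apply limsup_root_le_of_eventually_le_pow
  filter_upwards [eventually_ge_atTop (N + k),
    ENNReal.eventually_mul_add_one_pow_le_pow hK hr (ENNReal.div_ne_top hs_top ht0) m]
    with n hn hpoly
  calc (a n : ℝ≥0∞) ≤ c * (n + 1) ^ m * ∑ j ∈ range (k + 1), (b (n - j) : ℝ≥0∞) := by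
        exact_mod_cast h n
    _ ≤ c * (n + 1) ^ m * ∑ _j ∈ range (k + 1), (1 + t⁻¹) ^ k * t ^ n := by
        gcongr with j hj
        have hjk := mem_range_succ_iff.1 hj
        exact (hN _ (by omega)).trans (ENNReal.pow_sub_le_mul_pow ht0 ht_top hjk (by omega))
    _ = c * (k + 1) * (1 + t⁻¹) ^ k * (n + 1) ^ m * t ^ n := by
        rw [sum_const, card_range, nsmul_eq_mul]; push_cast; ring
    _ ≤ (s / t) ^ n * t ^ n := by gcongr
    _ = s ^ n := by rw [← mul_pow, ENNReal.div_mul_cancel ht0 ht_top]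

end GrowthRate

theorem classCount_mono {C D : Set PermSig} (h : C ⊆ D) (n : ℕ) :
    classCount C n ≤ classCount D n :=
  Nat.card_mono (Set.toFinite _) fun _ hπ => h hπ

theorem growthRate_mono {C D : Set PermSig} (h : C ⊆ D) : growthRate C ≤ growthRate D :=
  limsup_le_limsup <| Eventually.of_forall fun n =>
    ENNReal.rpow_le_rpow (by exact_mod_cast classCount_mono h n) (by positivity)

theorem growthRate_le_of_exists_deletion {C D : Set PermSig} {k : ℕ}
    (hD : ∀ n (π : Equiv.Perm (Fin n)), (⟨n, π⟩ : PermSig) ∈ D →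
      ∃ G : Finset (Fin n), #G ≤ k ∧ (⟨_, patternOn π Gᶜ⟩ : PermSig) ∈ C) :
    growthRate D ≤ growthRate C :=
  limsup_root_le_of_le_mul_sum_shift (c := k + 1) (m := 2 * k) fun n =>
    (classCount_le_of_exists_deletion hD n).trans <| by
      rw [pow_mul]
      gcongr
      nlinarith

theorem growthRate_av_articulation_general (k : ℕ)
    (α β : PermSig) (X : Set PermSig) :
    growthRate (IkClass k ∩ AvClass (X ∪ {DSum α (DSum (iotaSig 1) β)})) =
      growthRate (IkClass k ∩
        AvClass (X ∪ {DSum α (DSum (iotaSig 1) (DSum (iotaSig 1) β))})) := by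
  refine le_antisymm (growthRate_mono fun π ⟨hI, hπ⟩ => ⟨hI, ?_⟩)
    (growthRate_le_of_exists_deletion (k := k) fun n π ⟨hI, hπ⟩ => ?_)
  · rw [mem_avClass_union_singleton] at hπ ⊢
    exact ⟨hπ.1, fun hτ => hπ.2 <|
      ((involves_dsum_right (iotaSig 1) (DSum (iotaSig 1) β)).dsum_left α).trans hτ⟩
  · rw [mem_avClass_union_singleton] at hπ
    have hpat := involves_patternOn π (articulations α β π)ᶜ
    refine ⟨_, card_articulations_le hI hπ.2, IkClass_isPatternClass k _ _ hpat hI, ?_⟩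
    rw [mem_avClass_union_singleton]
    exact ⟨AvClass_isPatternClass X _ _ hpat hπ.1, not_involves_patternOn_compl_articulations⟩

/-- For any positive `k`, permutations `α`, `β` and set `X` of permutations, the
classes `I_k ∩ Av(X, α ⊕ 1 ⊕ β)` and `I_k ∩ Av(X, α ⊕ 1 ⊕ 1 ⊕ β)` have the same
growth rate. -/
theorem growthRate_av_articulation (k : ℕ) (hk : 0 < k)
    (α β : PermSig) (X : Set PermSig) :
    growthRate (IkClass k ∩ AvClass (X ∪ {DSum α (DSum (iotaSig 1) β)})) =
      growthRate (IkClass k ∩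
        AvClass (X ∪ {DSum α (DSum (iotaSig 1) (DSum (iotaSig 1) β))})) :=
  growthRate_av_articulation_general k α β X
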